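/- arXiv:0903.5125 — 3 statements merged into one kernel-verified Lean document; each statement's English description precedes it below -/
import Mathlib

section
/- For every C > 0 and σ > 0 there exists τ₁ = τ₁(C,σ) > 0 such that: if u is harmonic on the unit disc D with u(z) ≤ C·log(e/(1−|z|)) for all z ∈ D, and for some θ ∈ [0,2π] and r ∈ (0,1) one has u(re^{iθ}) > σ·log(e/(1−r)), then u(re^{i(θ+δ)}) > (σ/2)·log(e/(1−r)) for all δ with |δ| < τ₁(1−r). -/
/-!
Fix `z₀ = r e^{iθ}` and the disc `B` of radius `ρ = (1 - r)/2` around it. On `B` we have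
`1 - |w| > ρ`, so the growth bound gives `u < M := 2 C log(e/(1-r))` there. Writing `u = Re F`,
the Borel–Carathéodory inequality applied to `F - F(z₀)` on `B` bounds the drop
`u(z₀) - u(z)` by `2 (M - u(z₀)) |z - z₀| / (ρ - |z - z₀|)`. Since `u(z₀) > 0` and
`|z - z₀| ≤ r |δ| < τ₁ (1 - r)`, this drop is at most `16 C τ₁ log(e/(1-r))`, which is below
`(σ/2) log(e/(1-r))` once `τ₁ ≤ σ / (32 C)`.
-/

open Metric

/-- `u` is harmonic on the open unit disc; on the (simply connected) disc this is
equivalent to `u` being the real part of a holomorphic function. -/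
def HarmonicOnDisc (u : ℂ → ℝ) : Prop :=
  ∃ F : ℂ → ℂ, DifferentiableOn ℂ F (Metric.ball 0 1) ∧
    ∀ z ∈ Metric.ball (0:ℂ) 1, u z = (F z).re

namespace Complex

theorem borelCaratheodory_sub {F : ℂ → ℂ} {z₀ z : ℂ} {ρ A : ℝ} (hA : 0 < A)
    (hF : DifferentiableOn ℂ F (ball z₀ ρ)) (hRe : ∀ w ∈ ball z₀ ρ, (F w - F z₀).re ≤ A)
    (hz : z ∈ ball z₀ ρ) :
    ‖F z - F z₀‖ ≤ 2 * A * dist z z₀ / (ρ - dist z z₀) := by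
  have hshift : ∀ w ∈ ball (0 : ℂ) ρ, z₀ + w ∈ ball z₀ ρ := fun w hw => by
    simpa [mem_ball, dist_eq] using hw
  have hF' : DifferentiableOn ℂ (fun w => F (z₀ + w) - F z₀) (ball 0 ρ) :=
    (hF.comp (differentiableOn_const z₀ |>.add differentiableOn_id) hshift).sub_const _
  have hzρ : z - z₀ ∈ ball (0 : ℂ) ρ := by simpa [mem_ball, dist_eq] using hz
  simpa [dist_eq] using borelCaratheodory_zero hA hF' (fun w hw => hRe _ (hshift w hw))
    (pos_of_mem_ball hz) hzρ (by simp)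

theorem re_sub_re_le_of_forall_re_lt {F : ℂ → ℂ} {z₀ z : ℂ} {ρ M : ℝ}
    (hF : DifferentiableOn ℂ F (ball z₀ ρ)) (hM : ∀ w ∈ ball z₀ ρ, (F w).re < M)
    (hz : z ∈ ball z₀ ρ) :
    (F z₀).re - (F z).re ≤ 2 * (M - (F z₀).re) * dist z z₀ / (ρ - dist z z₀) := by
  have hz₀ : z₀ ∈ ball z₀ ρ := mem_ball_self (pos_of_mem_ball hz)
  have hBC := borelCaratheodory_sub (sub_pos.2 (hM z₀ hz₀)) hF
    (fun w hw => by simpa using (hM w hw).le) hz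
  calc (F z₀).re - (F z).re = -(F z - F z₀).re := by simp
    _ ≤ ‖F z - F z₀‖ := (neg_le_abs _).trans (abs_re_le_norm _)
    _ ≤ _ := hBC

theorem dist_ofReal_mul_exp_I_mul_add_le (r θ δ : ℝ) :
    dist ((r : ℂ) * exp (I * ((θ + δ : ℝ) : ℂ))) ((r : ℂ) * exp (I * (θ : ℂ))) ≤ |r| * |δ| := by
  have hrot : (r : ℂ) * exp (I * ((θ + δ : ℝ) : ℂ)) - (r : ℂ) * exp (I * (θ : ℂ)) =
      (r : ℂ) * exp (I * (θ : ℂ)) * (exp (I * (δ : ℂ)) - 1) := by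
    push_cast
    rw [mul_add, exp_add]
    ring
  rw [dist_eq, hrot, norm_mul, norm_mul, norm_exp_I_mul_ofReal, norm_real, mul_one]
  exact mul_le_mul_of_nonneg_left Real.norm_exp_I_mul_ofReal_sub_one_le (norm_nonneg _)

end Complex

lemma Real.log_exp_one_div_eq {t : ℝ} (ht : 0 < t) :
    Real.log (Real.exp 1 / t) = 1 - Real.log t := by
  rw [Real.log_div (Real.exp_ne_zero 1) ht.ne', Real.log_exp]

lemma Real.one_le_log_exp_one_div {t : ℝ} (h0 : 0 < t) (h1 : t ≤ 1) :
    1 ≤ Real.log (Real.exp 1 / t) := by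
  rw [Real.log_exp_one_div_eq h0]
  linarith [Real.log_nonpos h0.le h1]

lemma Real.log_exp_one_div_half_le {t : ℝ} (h0 : 0 < t) (h1 : t ≤ 1) :
    Real.log (Real.exp 1 / (t / 2)) ≤ 2 * Real.log (Real.exp 1 / t) := by
  rw [Real.log_exp_one_div_eq h0, Real.log_exp_one_div_eq (half_pos h0),
    Real.log_div h0.ne' two_ne_zero]
  linarith [Real.log_nonpos h0.le h1, Real.log_two_lt_d9]

lemma half_one_sub_norm_lt_one_sub_norm {E : Type*} [SeminormedAddCommGroup E] {z₀ w : E}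
    (hw : w ∈ ball z₀ ((1 - ‖z₀‖) / 2)) : (1 - ‖z₀‖) / 2 < 1 - ‖w‖ := by
  rw [mem_ball, dist_eq_norm] at hw
  linarith [norm_le_norm_add_norm_sub' w z₀]

lemma ball_half_one_sub_norm_subset_ball {E : Type*} [SeminormedAddCommGroup E] (z₀ : E) :
    ball z₀ ((1 - ‖z₀‖) / 2) ⊆ ball 0 1 := fun w hw => by
  have := half_one_sub_norm_lt_one_sub_norm hw
  rw [mem_ball_zero_iff]
  linarith [pos_of_mem_ball hw]

lemma lt_two_mul_growth_of_mem_ball_half {u : ℂ → ℝ} {C : ℝ} (hC : 0 < C)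
    (hub : ∀ z ∈ ball (0:ℂ) 1, u z ≤ C * Real.log (Real.exp 1 / (1 - ‖z‖)))
    {z₀ w : ℂ} (hw : w ∈ ball z₀ ((1 - ‖z₀‖) / 2)) :
    u w < 2 * C * Real.log (Real.exp 1 / (1 - ‖z₀‖)) := by
  have hρ : 0 < 1 - ‖z₀‖ := by linarith [pos_of_mem_ball hw]
  have hgap := half_one_sub_norm_lt_one_sub_norm hw
  calc u w ≤ C * Real.log (Real.exp 1 / (1 - ‖w‖)) :=
        hub w (ball_half_one_sub_norm_subset_ball z₀ hw)
    _ < C * Real.log (Real.exp 1 / ((1 - ‖z₀‖) / 2)) := by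
        gcongr
        exact div_pos (Real.exp_pos 1) (by linarith)
    _ ≤ C * (2 * Real.log (Real.exp 1 / (1 - ‖z₀‖))) := by
        gcongr
        exact Real.log_exp_one_div_half_le hρ (by linarith [norm_nonneg z₀])
    _ = 2 * C * Real.log (Real.exp 1 / (1 - ‖z₀‖)) := by ring

theorem HarmonicOnDisc.sub_le_of_dist_le {u : ℂ → ℝ} {C τ : ℝ} (hu : HarmonicOnDisc u)
    (hC : 0 < C) (hub : ∀ z ∈ ball (0:ℂ) 1, u z ≤ C * Real.log (Real.exp 1 / (1 - ‖z‖)))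
    (hτ : τ ≤ 1 / 4) {z₀ z : ℂ} (hz₀ : ‖z₀‖ < 1) (hu₀ : 0 ≤ u z₀)
    (hz : dist z z₀ ≤ τ * (1 - ‖z₀‖)) :
    u z₀ - u z ≤ 16 * C * τ * Real.log (Real.exp 1 / (1 - ‖z₀‖)) := by
  obtain ⟨F, hF, hFu⟩ := hu
  set ρ := (1 - ‖z₀‖) / 2
  set M := 2 * C * Real.log (Real.exp 1 / (1 - ‖z₀‖))
  have hρ : 0 < ρ := by simp only [ρ]; linarith
  have hτ0 : 0 ≤ τ := nonneg_of_mul_nonneg_left (dist_nonneg.trans hz) (by linarith)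
  have hzρ : dist z z₀ ≤ 2 * τ * ρ := by simp only [ρ]; linarith
  have hd : dist z z₀ ≤ ρ / 2 := hzρ.trans (by nlinarith)
  have hsub : ball z₀ ρ ⊆ ball 0 1 := ball_half_one_sub_norm_subset_ball z₀
  have hzB : z ∈ ball z₀ ρ := mem_ball.2 (by linarith)
  have hz₀B : z₀ ∈ ball z₀ ρ := mem_ball_self hρ
  have hdrop := Complex.re_sub_re_le_of_forall_re_lt (hF.mono hsub)
    (fun w hw => hFu w (hsub hw) ▸ lt_two_mul_growth_of_mem_ball_half hC hub hw) hzB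
  rw [← hFu z₀ (hsub hz₀B), ← hFu z (hsub hzB)] at hdrop
  have hA : 0 < M - u z₀ := sub_pos.2 (lt_two_mul_growth_of_mem_ball_half hC hub hz₀B)
  calc u z₀ - u z ≤ 2 * (M - u z₀) * dist z z₀ / (ρ - dist z z₀) := hdrop
    _ ≤ 2 * M * (2 * τ * ρ) / (ρ / 2) := by
        have hM : 0 ≤ M := by linarith
        apply div_le_div₀ (by positivity) _ (by positivity) (by linarith)
        exact mul_le_mul (by linarith) hzρ dist_nonneg (by positivity)
    _ = 16 * C * τ * Real.log (Real.exp 1 / (1 - ‖z₀‖)) := by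
        simp only [M]; field_simp; ring

/-- For every `C, σ > 0` there is `τ₁ = τ₁(C,σ) > 0` such that: if `u` is harmonic on the
unit disc with `u(z) ≤ C log(e/(1-|z|))`, `θ ∈ [0, 2π]`, `r ∈ (0,1)` and
`u(re^{iθ}) > σ log(e/(1-r))`, then `u(re^{i(θ+δ)}) > (σ/2) log(e/(1-r))` whenever
`|δ| < τ₁ (1-r)`. -/
theorem stmt9 (C σ : ℝ) (hC : 0 < C) (hσ : 0 < σ) :
    ∃ τ₁ : ℝ, 0 < τ₁ ∧
      ∀ u : ℂ → ℝ, HarmonicOnDisc u →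
        (∀ z ∈ Metric.ball (0:ℂ) 1, u z ≤ C * Real.log (Real.exp 1 / (1 - ‖z‖))) →
        ∀ θ ∈ Set.Icc (0:ℝ) (2 * Real.pi), ∀ r ∈ Set.Ioo (0:ℝ) 1,
          σ * Real.log (Real.exp 1 / (1 - r)) <
              u ((r : ℂ) * Complex.exp (Complex.I * (θ : ℂ))) →
          ∀ δ : ℝ, |δ| < τ₁ * (1 - r) →
            σ / 2 * Real.log (Real.exp 1 / (1 - r)) <
              u ((r : ℂ) * Complex.exp (Complex.I * ((θ + δ : ℝ) : ℂ))) := by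
  set τ₁ := min (1 / 4) (σ / (32 * C))
  have hτσ : 32 * C * τ₁ ≤ σ := by
    have := min_le_right (1 / 4) (σ / (32 * C))
    rwa [le_div_iff₀ (by positivity), mul_comm] at this
  refine ⟨τ₁, by positivity, ?_⟩
  rintro u hu hub θ - r ⟨hr0, hr1⟩ hbig δ hδ
  set L := Real.log (Real.exp 1 / (1 - r))
  set z₀ := (r : ℂ) * Complex.exp (Complex.I * (θ : ℂ))
  have hz₀ : ‖z₀‖ = r := by simp [z₀, Complex.norm_exp_I_mul_ofReal, abs_of_pos hr0]
  have hd : dist _ z₀ ≤ τ₁ * (1 - r) := calc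
    _ ≤ |r| * |δ| := Complex.dist_ofReal_mul_exp_I_mul_add_le r θ δ
    _ ≤ |δ| := by rw [abs_of_pos hr0]; exact mul_le_of_le_one_left (abs_nonneg _) hr1.le
    _ ≤ τ₁ * (1 - r) := hδ.le
  have hL : 1 ≤ L := Real.one_le_log_exp_one_div (by linarith) (by linarith)
  have hu₀ : 0 < u z₀ := (mul_pos hσ (by linarith)).trans hbig
  have hdrop := hu.sub_le_of_dist_le hC hub (min_le_left _ _) (hz₀ ▸ hr1) hu₀.le (hz₀ ▸ hd)
  rw [hz₀] at hdrop
  have hτL : 16 * C * τ₁ * L ≤ σ / 2 * L := by gcongr; linarith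
  linarith
end

section
/- Let P(re^{iθ}) = (1/2π)·(1−r²)/(1−2r·cos θ + r²) denote the Poisson kernel. If r ∈ (0,1), τ ∈ (0,1), and 0 < δ < τ(1−r), then for every θ, P(re^{iθ}) > (1−τ)·P(re^{i(θ+δ)}). -/
/-!
Write `P(re^{iθ}) = (1-r²)/(2π D(θ))` with `D(t) = 1 - 2r cos t + r² = |1 - re^{it}|²`.
The identity `D² = ((1-r²) sin t)² + ((1+r²) cos t - 2r)²` gives `(1-r²)|sin t| ≤ D`, so the
logarithmic derivative `2r sin t / D` of `D` is bounded by `L = 2r/(1-r²)`. Hence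
`D(θ+δ) ≥ e^{-Lδ} D(θ) ≥ (1 - Lδ) D(θ)`, and `Lδ < 2rτ/(1+r) ≤ τ`.
-/

noncomputable section

/-- The Poisson kernel `P(re^{iθ}) = (1/2π) (1-r²)/(1-2r cos θ + r²)`. -/
def diskPoissonKernel (r θ : ℝ) : ℝ :=
  (1 / (2 * Real.pi)) * (1 - r ^ 2) / (1 - 2 * r * Real.cos θ + r ^ 2)

open Real

def poissonDenom (r t : ℝ) : ℝ := 1 - 2 * r * cos t + r ^ 2

lemma diskPoissonKernel_eq (r θ : ℝ) :
    diskPoissonKernel r θ = (1 - r ^ 2) / (2 * π) / poissonDenom r θ := by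
  rw [diskPoissonKernel, poissonDenom, one_div_mul_eq_div]

lemma poissonDenom_pos {r : ℝ} (hr : |r| < 1) (t : ℝ) : 0 < poissonDenom r t := by
  have hcos : r * cos t ≤ |r| := (le_abs_self _).trans <| by
    rw [abs_mul]; exact mul_le_of_le_one_right (abs_nonneg r) (abs_cos_le_one t)
  have : (1 - |r|) ^ 2 ≤ poissonDenom r t := by
    rw [poissonDenom, sub_sq, ← sq_abs r]
    linarith
  exact (pow_pos (sub_pos.mpr hr) 2).trans_le this

lemma abs_one_sub_sq_mul_sin_le_poissonDenom (r t : ℝ) :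
    |(1 - r ^ 2) * sin t| ≤ poissonDenom r t := by
  have hD_sq : poissonDenom r t ^ 2 =
      ((1 - r ^ 2) * sin t) ^ 2 + ((1 + r ^ 2) * cos t - 2 * r) ^ 2 := by
    rw [poissonDenom]
    linear_combination -(1 - r ^ 2) ^ 2 * sin_sq_add_cos_sq t
  have hD_eq : poissonDenom r t = (1 - r * cos t) ^ 2 + (r * sin t) ^ 2 := by
    rw [poissonDenom]
    linear_combination -r ^ 2 * sin_sq_add_cos_sq t
  refine abs_le_of_sq_le_sq ?_ (by rw [hD_eq]; positivity)
  rw [hD_sq]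
  exact le_add_of_nonneg_right (sq_nonneg _)

lemma hasDerivAt_log_poissonDenom {r : ℝ} (hr : |r| < 1) (t : ℝ) :
    HasDerivAt (fun t ↦ log (poissonDenom r t)) (2 * r * sin t / poissonDenom r t) t := by
  have hD : HasDerivAt (poissonDenom r) (-(2 * r * -sin t)) t :=
    (((hasDerivAt_cos t).const_mul (2 * r)).const_sub 1).add_const (r ^ 2)
  rw [mul_neg, neg_neg] at hD
  exact hD.log (poissonDenom_pos hr t).ne'

lemma abs_logDeriv_poissonDenom_le {r : ℝ} (hr : |r| < 1) (t : ℝ) :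
    |2 * r * sin t / poissonDenom r t| ≤ 2 * |r| / (1 - r ^ 2) := by
  have hD := poissonDenom_pos hr t
  have hr2 : 0 < 1 - r ^ 2 := by nlinarith [sq_abs r, abs_nonneg r]
  rw [abs_div, abs_of_pos hD, div_le_div_iff₀ hD hr2, abs_mul, abs_mul, abs_two]
  calc 2 * |r| * |sin t| * (1 - r ^ 2) = 2 * |r| * |(1 - r ^ 2) * sin t| := by
        rw [abs_mul, abs_of_pos hr2]; ring
    _ ≤ 2 * |r| * poissonDenom r t := by
        gcongr; exact abs_one_sub_sq_mul_sin_le_poissonDenom r t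

lemma abs_log_poissonDenom_sub_le {r : ℝ} (hr : |r| < 1) (x y : ℝ) :
    |log (poissonDenom r y) - log (poissonDenom r x)| ≤ 2 * |r| / (1 - r ^ 2) * |y - x| :=
  convex_univ.norm_image_sub_le_of_norm_hasDerivWithin_le
    (fun t _ ↦ (hasDerivAt_log_poissonDenom hr t).hasDerivWithinAt)
    (fun t _ ↦ abs_logDeriv_poissonDenom_le hr t) (Set.mem_univ x) (Set.mem_univ y)

lemma one_sub_mul_poissonDenom_le {r : ℝ} (hr : |r| < 1) (x y : ℝ) :
    (1 - 2 * |r| / (1 - r ^ 2) * |y - x|) * poissonDenom r x ≤ poissonDenom r y := by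
  have hx := poissonDenom_pos hr x
  have hlog := neg_le_of_abs_le (abs_log_poissonDenom_sub_le hr x y)
  calc (1 - 2 * |r| / (1 - r ^ 2) * |y - x|) * poissonDenom r x
      ≤ exp (log (poissonDenom r y) - log (poissonDenom r x)) * poissonDenom r x := by
        gcongr
        linarith [add_one_le_exp (log (poissonDenom r y) - log (poissonDenom r x))]
    _ = poissonDenom r y := by
        rw [exp_sub, exp_log hx, exp_log (poissonDenom_pos hr y), div_mul_cancel₀ _ hx.ne']

theorem stmt11_general (r τ δ : ℝ) (hr : r ∈ Set.Ioo (0:ℝ) 1)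
    (hδ0 : 0 < δ) (hδ : δ < τ * (1 - r)) (θ : ℝ) :
    (1 - τ) * diskPoissonKernel r (θ + δ) < diskPoissonKernel r θ := by
  obtain ⟨hr0, hr1⟩ := hr
  have habs : |r| < 1 := abs_lt.mpr ⟨by linarith, hr1⟩
  have hr2 : 0 < 1 - r ^ 2 := by nlinarith
  have hLδ : 2 * r / (1 - r ^ 2) * δ < τ := by
    rw [div_mul_eq_mul_div, div_lt_iff₀ hr2]
    calc 2 * r * δ < 2 * r * (τ * (1 - r)) := by gcongr
      _ ≤ (1 + r) * (τ * (1 - r)) := by gcongr <;> linarith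
      _ = τ * (1 - r ^ 2) := by ring
  have hdenom : (1 - τ) * poissonDenom r θ < poissonDenom r (θ + δ) := by
    have h := one_sub_mul_poissonDenom_le habs θ (θ + δ)
    rw [abs_of_pos hr0, add_sub_cancel_left, abs_of_pos hδ0] at h
    exact (mul_lt_mul_of_pos_right (by linarith) (poissonDenom_pos habs θ)).trans_le h
  have hc : 0 < (1 - r ^ 2) / (2 * π) := by positivity
  rw [diskPoissonKernel_eq, diskPoissonKernel_eq, mul_div_assoc',
    div_lt_div_iff₀ (poissonDenom_pos habs _) (poissonDenom_pos habs _)]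
  linarith [mul_lt_mul_of_pos_left hdenom hc]

/-- If `r ∈ (0,1)`, `τ ∈ (0,1)` and `0 < δ < τ(1-r)`, then
`P(re^{iθ}) > (1-τ) P(re^{i(θ+δ)})` for every `θ`. -/
theorem stmt11 (r τ δ : ℝ) (hr : r ∈ Set.Ioo (0:ℝ) 1) (hτ : τ ∈ Set.Ioo (0:ℝ) 1)
    (hδ0 : 0 < δ) (hδ : δ < τ * (1 - r)) (θ : ℝ) :
    (1 - τ) * diskPoissonKernel r (θ + δ) < diskPoissonKernel r θ :=
  stmt11_general r τ δ hr hδ0 hδ θ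
end
end

section
/- For each integer A ≥ 2 the series Σ_{k=0}^∞ A^k z^{2^{A^k}} converges for every z in the unit disc D, and there exists a constant C (depending on A) such that the function u(z) = Re Σ_{k=0}^∞ A^k z^{2^{A^k}} satisfies |u(z)| ≤ C·log(e/(1−|z|)) for all z ∈ D. -/
/-!
Bound `|u(z)|` by `∑ A^k r^{2^{A^k}}` with `r = |z|`, and split this sum at the first index `K`
with `(1 - r) 2^{A^K} > 1`. The terms before `K` contribute at most `∑_{k<K} A^k ≤ A^K`, and
since `(1 - r) 2^{A^{K-1}} ≤ 1` gives `A^{K-1} log 2 ≤ log (1/(1-r))`, we get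
`A^K ≤ 2A log(e/(1-r))`. Beyond `K`, `(1 - r) 2^{A^{K+j}} ≥ A^j`, so
`r^{2^{A^{K+j}}} ≤ e^{-A^j}` and the tail is at most
`A^K ∑_j A^j e^{-A^j} ≤ A^K ∑_m m e^{-m} ≤ 2 A^K`.
-/

open Filter

noncomputable section

open Finset Real

lemma summable_natCast_mul_pow_comp {r : ℝ} (hr0 : 0 ≤ r) (hr1 : r < 1) {e : ℕ → ℕ}
    (he : Function.Injective e) : Summable fun k => (e k : ℝ) * r ^ e k := by
  have hr : ‖r‖ < 1 := by rwa [norm_of_nonneg hr0]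
  have h : Summable fun n : ℕ => (n : ℝ) * r ^ n := by
    simpa using summable_pow_mul_geometric_of_norm_lt_one 1 hr
  exact h.comp_injective he

lemma tsum_natCast_mul_pow_comp_le {r : ℝ} (hr0 : 0 ≤ r) (hr1 : r < 1) {e : ℕ → ℕ}
    (he : Function.Injective e) : ∑' k, (e k : ℝ) * r ^ e k ≤ r / (1 - r) ^ 2 := by
  have hr : ‖r‖ < 1 := by rwa [norm_of_nonneg hr0]
  rw [← tsum_coe_mul_geometric_of_norm_lt_one hr]
  refine (summable_natCast_mul_pow_comp hr0 hr1 he).tsum_le_tsum_of_inj e he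
    (fun _ _ => by positivity) (fun _ => le_rfl) ?_
  simpa using summable_pow_mul_geometric_of_norm_lt_one 1 hr

lemma exp_neg_one_div_one_sub_sq_le_two : exp (-1) / (1 - exp (-1)) ^ 2 ≤ 2 := by
  have he : exp (-1) ≤ 1 / 2 := by
    rw [exp_neg, one_div]
    exact inv_anti₀ two_pos (by linarith [exp_one_gt_d9])
  have hp : 0 < exp (-1) := exp_pos _
  rw [div_le_iff₀ (by nlinarith)]
  nlinarith

lemma pow_le_exp_neg_mul {r : ℝ} (hr0 : 0 ≤ r) (n : ℕ) : r ^ n ≤ exp (-((1 - r) * n)) := by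
  calc r ^ n ≤ exp (-(1 - r)) ^ n :=
        pow_le_pow_left₀ hr0 (by linarith [add_one_le_exp (-(1 - r))]) n
    _ = exp (-((1 - r) * n)) := by rw [← exp_nat_mul]; ring_nf

lemma natCast_le_mul_pow {s B : ℝ} (hB : 2 ≤ B) (hsB : 1 ≤ s * B) {m : ℕ} (hm : 1 ≤ m) :
    (m : ℝ) ≤ s * B ^ m := by
  induction m, hm using Nat.le_induction with
  | base => simpa using hsB
  | succ m hm ih =>
    have : (1 : ℝ) ≤ m := by exact_mod_cast hm
    calc ((m + 1 : ℕ) : ℝ) ≤ m * 2 := by push_cast; linarith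
      _ ≤ s * B ^ m * B := by gcongr; linarith
      _ = s * B ^ (m + 1) := by ring

lemma natCast_le_two_mul_log_of_mul_two_pow_le_one {s : ℝ} (hs : 0 < s) {n : ℕ}
    (h : s * 2 ^ n ≤ 1) : (n : ℝ) ≤ 2 * log (exp 1 / s) := by
  have hlog : n * log 2 ≤ -log s := by
    rw [← log_pow, ← log_inv]
    rw [mul_comm, ← le_div_iff₀ hs, one_div] at h
    exact log_le_log (by positivity) h
  rw [log_div (exp_ne_zero 1) hs.ne', log_exp]
  have : (0 : ℝ) ≤ n := n.cast_nonneg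
  nlinarith [log_two_gt_d9]

lemma sum_range_pow_mul_pow_le {A : ℕ} (hA : 2 ≤ A) {r : ℝ} (hr0 : 0 ≤ r) (hr1 : r ≤ 1)
    (e : ℕ → ℕ) (K : ℕ) : ∑ k ∈ range K, (A : ℝ) ^ k * r ^ e k ≤ A ^ K := by
  calc ∑ k ∈ range K, (A : ℝ) ^ k * r ^ e k ≤ ∑ k ∈ range K, (A : ℝ) ^ k :=
        sum_le_sum fun k _ => mul_le_of_le_one_right (by positivity) (pow_le_one₀ hr0 hr1)
    _ ≤ A ^ K := by exact_mod_cast (Nat.geomSum_lt hA fun k hk => mem_range.mp hk).le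

lemma pow_le_two_mul_log_of_forall_lt {A K : ℕ} (hA : 1 ≤ A) {s : ℝ} (hs0 : 0 < s)
    (hs1 : s ≤ 1) (h : ∀ k < K, s * 2 ^ A ^ k ≤ 1) :
    (A : ℝ) ^ K ≤ 2 * A * log (exp 1 / s) := by
  have hA' : (1 : ℝ) ≤ A := by exact_mod_cast hA
  cases K with
  | zero =>
    have : 1 ≤ log (exp 1 / s) := by
      rw [log_div (exp_ne_zero 1) hs0.ne', log_exp]
      linarith [log_nonpos hs0.le hs1]
    simp only [pow_zero]
    nlinarith
  | succ k =>
    have hk := natCast_le_two_mul_log_of_mul_two_pow_le_one hs0 (h k k.lt_succ_self)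
    push_cast at hk
    calc (A : ℝ) ^ (k + 1) = A * A ^ k := pow_succ' _ _
      _ ≤ A * (2 * log (exp 1 / s)) := by gcongr
      _ = 2 * A * log (exp 1 / s) := by ring

lemma summable_pow_mul_pow_two_pow_pow {A : ℕ} (hA : 2 ≤ A) {r : ℝ} (hr0 : 0 ≤ r)
    (hr1 : r < 1) : Summable fun k => (A : ℝ) ^ k * r ^ 2 ^ A ^ k := by
  have he : Function.Injective fun k => 2 ^ A ^ k :=
    (Nat.pow_right_injective le_rfl).comp (Nat.pow_right_injective hA)
  refine (summable_natCast_mul_pow_comp hr0 hr1 he).of_nonneg_of_le (fun k => by positivity)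
    fun k => mul_le_mul_of_nonneg_right ?_ (by positivity)
  exact_mod_cast (Nat.lt_two_pow_self (n := A ^ k)).le

lemma tsum_pow_add_mul_pow_le {A K : ℕ} (hA : 2 ≤ A) {r : ℝ} (hr0 : 0 ≤ r)
    (hK : 1 ≤ (1 - r) * 2 ^ A ^ K) :
    ∑' j, (A : ℝ) ^ (j + K) * r ^ 2 ^ A ^ (j + K) ≤ 2 * A ^ K := by
  have he : Function.Injective fun j => A ^ j := Nat.pow_right_injective hA
  have hexp : exp (-1) < 1 := exp_lt_one_iff.mpr (by norm_num)
  have hbound : ∀ j, (A : ℝ) ^ (j + K) * r ^ 2 ^ A ^ (j + K) ≤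
      A ^ K * (((A ^ j : ℕ) : ℝ) * exp (-1) ^ A ^ j) := by
    intro j
    have hAj : ((A ^ j : ℕ) : ℝ) ≤ (1 - r) * ((2 ^ A ^ (j + K) : ℕ) : ℝ) := by
      have h := natCast_le_mul_pow (le_self_pow₀ one_le_two (pow_ne_zero K (by omega))) hK
        (Nat.one_le_pow j A (by omega))
      rwa [← pow_mul, ← pow_add, add_comm, ← Nat.cast_ofNat, ← Nat.cast_pow] at h
    have hr : r ^ 2 ^ A ^ (j + K) ≤ exp (-1) ^ A ^ j :=
      calc r ^ 2 ^ A ^ (j + K) ≤ exp (-((1 - r) * ((2 ^ A ^ (j + K) : ℕ) : ℝ))) :=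
            pow_le_exp_neg_mul hr0 _
        _ ≤ exp (-((A ^ j : ℕ) : ℝ)) := exp_le_exp.mpr (neg_le_neg hAj)
        _ = exp (-1) ^ A ^ j := by rw [← exp_nat_mul]; ring_nf
    rw [pow_add, Nat.cast_pow, mul_comm ((A : ℝ) ^ j), mul_assoc]
    gcongr
  have hsum := summable_natCast_mul_pow_comp (exp_pos (-1)).le hexp he
  calc ∑' j, (A : ℝ) ^ (j + K) * r ^ 2 ^ A ^ (j + K)
      ≤ ∑' j, (A : ℝ) ^ K * (((A ^ j : ℕ) : ℝ) * exp (-1) ^ A ^ j) :=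
        ((hsum.mul_left _).of_nonneg_of_le (fun j => by positivity) hbound).tsum_le_tsum hbound
          (hsum.mul_left _)
    _ = A ^ K * ∑' j, ((A ^ j : ℕ) : ℝ) * exp (-1) ^ A ^ j := tsum_mul_left
    _ ≤ A ^ K * 2 := by
        gcongr
        exact (tsum_natCast_mul_pow_comp_le (exp_pos (-1)).le hexp he).trans
          exp_neg_one_div_one_sub_sq_le_two
    _ = 2 * A ^ K := mul_comm _ _

theorem tsum_pow_mul_pow_two_pow_pow_le {A : ℕ} (hA : 2 ≤ A) {r : ℝ} (hr0 : 0 ≤ r)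
    (hr1 : r < 1) : ∑' k, (A : ℝ) ^ k * r ^ 2 ^ A ^ k ≤ 6 * A * log (exp 1 / (1 - r)) := by
  have hs : 0 < 1 - r := by linarith
  have hK : ∃ K, 1 < (1 - r) * 2 ^ A ^ K := by
    obtain ⟨n, hn⟩ := pow_unbounded_of_one_lt (1 - r)⁻¹ (one_lt_two (α := ℝ))
    refine ⟨n, (inv_lt_iff_one_lt_mul₀' hs).mp (hn.trans_le ?_)⟩
    exact pow_le_pow_right₀ one_le_two (Nat.lt_pow_self (by omega)).le
  set K := Nat.find hK
  have head := sum_range_pow_mul_pow_le hA hr0 hr1.le (fun k => 2 ^ A ^ k) K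
  have tail := tsum_pow_add_mul_pow_le hA hr0 (Nat.find_spec hK).le
  have hAK := pow_le_two_mul_log_of_forall_lt (by omega) hs (by linarith)
    fun k hk => not_lt.mp (Nat.find_min hK hk)
  rw [← (summable_pow_mul_pow_two_pow_pow hA hr0 hr1).sum_add_tsum_nat_add K]
  linarith

/-- For each integer `A ≥ 2`, the series `Σ_{k≥0} A^k z^{2^{A^k}}` converges for every `z`
in the unit disc and `u(z) = Re Σ_{k≥0} A^k z^{2^{A^k}}` satisfies
`|u(z)| ≤ C log(e/(1-|z|))` for some constant `C = C(A)`. -/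
theorem stmt14 (A : ℕ) (hA : 2 ≤ A) :
    (∀ z ∈ Metric.ball (0:ℂ) 1, Summable fun n : ℕ => (A : ℂ) ^ n * z ^ 2 ^ A ^ n) ∧
      ∃ C : ℝ, 0 < C ∧ ∀ z ∈ Metric.ball (0:ℂ) 1,
        |(∑' n : ℕ, (A : ℂ) ^ n * z ^ 2 ^ A ^ n).re| ≤
          C * Real.log (Real.exp 1 / (1 - ‖z‖)) := by
  have hnorm (z : ℂ) : (fun n : ℕ => ‖(A : ℂ) ^ n * z ^ 2 ^ A ^ n‖) =
      fun n => (A : ℝ) ^ n * ‖z‖ ^ 2 ^ A ^ n := by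
    ext n
    rw [norm_mul, norm_pow, norm_pow, Complex.norm_natCast]
  have hsum (z : ℂ) (hz : z ∈ Metric.ball (0:ℂ) 1) :
      Summable fun n : ℕ => ‖(A : ℂ) ^ n * z ^ 2 ^ A ^ n‖ := by
    rw [hnorm]
    exact summable_pow_mul_pow_two_pow_pow hA (norm_nonneg z) (mem_ball_zero_iff.mp hz)
  have hA2 : (2 : ℝ) ≤ A := by exact_mod_cast hA
  refine ⟨fun z hz => (hsum z hz).of_norm, 6 * A, by linarith, fun z hz => ?_⟩
  calc |(∑' n : ℕ, (A : ℂ) ^ n * z ^ 2 ^ A ^ n).re|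
      ≤ ‖∑' n : ℕ, (A : ℂ) ^ n * z ^ 2 ^ A ^ n‖ := Complex.abs_re_le_norm _
    _ ≤ ∑' n : ℕ, ‖(A : ℂ) ^ n * z ^ 2 ^ A ^ n‖ := norm_tsum_le_tsum_norm (hsum z hz)
    _ = ∑' n : ℕ, (A : ℝ) ^ n * ‖z‖ ^ 2 ^ A ^ n := by rw [hnorm]
    _ ≤ 6 * A * Real.log (Real.exp 1 / (1 - ‖z‖)) :=
        tsum_pow_mul_pow_two_pow_pow_le hA (norm_nonneg z) (mem_ball_zero_iff.mp hz)
end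
end
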